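/- arXiv:1704.08820 — 7 statements merged into one kernel-verified Lean document; each statement's English description precedes it below -/
import Mathlib

section
/- Let u ∈ Σ* and let T(u) = lfp F^u be the parse table of a GTDPL program P on u, defined as the least fixed point of the table operator F^u. Then for all row indices i and column indices j with j ≤ |u|: T(u)_{ij} = f iff (A_i, u_j) ⇒ f; T(u)_{ij} = m ∈ ℕ iff (A_i, u_j) ⇒ u_{j+m}; and T(u)_{ij} = ⊥ iff there is no r with (A_i, u_j) ⇒ r. Moreover for j > |u|, T(u)_{ij} = T(u)_{i|u|}. Conversely, any table satisfying these four properties equals T(u). -/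
/-!
`T(u)` is the union of the stages `(F^u)ⁿ(⊥)`, which increase because `F^u` is monotone for
the flat order on entries. Induction on `n` shows that every entry resolved at some stage is
justified by a derivation of `Matches` on the suffix `u_j` (soundness), and induction on
derivations shows that every derivation on a suffix `u_j` is recorded at some stage
(completeness); this characterizes the columns `j ≤ |u|`. Beyond `|u|` every column reads only
the end marker, which no rule matches, so each stage is constant there. Uniqueness holds because
the four properties determine every entry.
-/

/-- GTDPL rule right-hand sides: `ε`, failure `f`, a terminal symbol, or a
ternary expression `A_x[A_y,A_z]` (nonterminals are rule indices). -/
inductive GExpr (σ ν : Type) : Type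
  | eps : GExpr σ ν
  | fail : GExpr σ ν
  | sym (a : σ) : GExpr σ ν
  | tern (x y z : ν) : GExpr σ ν

/-- Parse results: a number of consumed symbols, or failure `f`. -/
inductive Res : Type
  | ok (m : ℕ) : Res
  | fail : Res

/-- Tables with entries in `Res_⊥` (`none` is the bottom element `⊥`),
indexed by a rule index and a column. -/
abbrev Table (ν : Type) := ν → ℕ → Option Res

/-- The pointwise table order, with the flat order (`⊥` below everything) on entries. -/
def tableLE {ν : Type} (T T' : Table ν) : Prop :=
  ∀ i j, T i j = none ∨ T i j = T' i j

/-- The bottom table `⊥`. -/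
def botTable {ν : Type} : Table ν := fun _ _ => none

/-- One application of the parse-table operator `F^u` of a program `rule` on
input `u`; columns at offsets `≥ |u|` carry the end marker `hash` (modelling the
infinite padding `w = u·#^ω`), which matches no symbol of any rule since `# ∉ Σ`. -/
def step {σ ν : Type} [DecidableEq σ] (rule : ν → GExpr σ ν) (hash : σ)
    (u : List σ) (T : Table ν) : Table ν :=
  fun i j =>
    match rule i with
    | .eps => some (.ok 0)
    | .fail => some .fail
    | .sym a => if u.getD j hash = a then some (.ok 1) else some .fail
    | .tern x y z =>
      match T x j with
      | some (.ok m) =>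
        match T y (j + m) with
        | some (.ok m') => some (.ok (m + m'))
        | some .fail => some .fail
        | none => none
      | some .fail => T z j
      | none => none

/-- The restricted operator `F^{(u)} = F^u` applied only at columns `j < |u|`,
leaving all other entries unchanged. -/
def stepPrefix {σ ν : Type} [DecidableEq σ] (rule : ν → GExpr σ ν) (hash : σ)
    (u : List σ) (T : Table ν) : Table ν :=
  fun i j => if j < u.length then step rule hash u T i j else T i j

/-- `T` is the least fixed point `⨆ₙ Fⁿ(⊥)` of the continuous table operator `F`,
characterized entrywise: an entry is resolved in `T` iff it is resolved (with the
same value) at some finite stage of the iteration from `⊥`. -/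
def IsLfp {ν : Type} (F : Table ν → Table ν) (T : Table ν) : Prop :=
  ∀ i j r, T i j = some r ↔ ∃ n, F^[n] botTable i j = some r

/-- The dynamic dependency map `D^T`: for a complex rule `A_i ← A_x[A_y,A_z]`,
the entry `(i,j)` depends on `(y, j+m)` if `T x j = m`, on `(z, j)` if
`T x j = f`, and is undefined otherwise (also for simple rules). -/
def dynDep {σ ν : Type} (rule : ν → GExpr σ ν) (T : Table ν) (i : ν) (j : ℕ) :
    Option (ν × ℕ) :=
  match rule i with
  | .tern x y z =>
    match T x j with
    | some (.ok m) => some (y, j + m)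
    | some .fail => some (z, j)
    | none => none
  | _ => none

/-- The GTDPL matching relation `(A_i, u) ⇒ r` of the program `rule`:
`some v` is success with remaining suffix `v`, `none` is failure `f`. -/
inductive Matches {σ ν : Type} (rule : ν → GExpr σ ν) :
    ν → List σ → Option (List σ) → Prop
  | eps {A : ν} {u : List σ} : rule A = .eps → Matches rule A u (some u)
  | fail {A : ν} {u : List σ} : rule A = .fail → Matches rule A u none
  | symOk {A : ν} {a : σ} {u : List σ} :
      rule A = .sym a → Matches rule A (a :: u) (some u)
  | symFail {A : ν} {a : σ} {u : List σ} :
      rule A = .sym a → (∀ u', u ≠ a :: u') → Matches rule A u none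
  | ternSucc {A x y z : ν} {u v : List σ} {r : Option (List σ)} :
      rule A = .tern x y z →
      Matches rule x u (some v) → Matches rule y v r → Matches rule A u r
  | ternFail {A x y z : ν} {u : List σ} {r : Option (List σ)} :
      rule A = .tern x y z →
      Matches rule x u none → Matches rule z u r → Matches rule A u r

/-- The characterizing properties of the parse table `T(u)`: for `j ≤ |u|`,
`T_{ij} = f` iff `(A_i, u_j) ⇒ f`; `T_{ij} = m` iff `(A_i, u_j) ⇒ u_{j+m}`
(so `j + m ≤ |u|`); `T_{ij} = ⊥` iff `(A_i, u_j)` has no result; and for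
`j > |u|`, `T_{ij} = T_{i|u|}`. -/
def FundamentalProps {σ ν : Type} (rule : ν → GExpr σ ν) (u : List σ)
    (T : Table ν) : Prop :=
  (∀ i j, j ≤ u.length →
    (T i j = some .fail ↔ Matches rule i (u.drop j) none) ∧
    (∀ m, T i j = some (.ok m) ↔
      (j + m ≤ u.length ∧ Matches rule i (u.drop j) (some (u.drop (j + m))))) ∧
    (T i j = none ↔ ∀ r, ¬ Matches rule i (u.drop j) r)) ∧
  (∀ i j, u.length < j → T i j = T i u.length)

theorem List.drop_eq_cons_iff {α : Type*} {l v : List α} {a : α} {j : ℕ} :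
    l.drop j = a :: v ↔ ∃ h : j < l.length, l[j] = a ∧ v = l.drop (j + 1) := by
  constructor
  · intro h
    have hj : j < l.length := by
      have := congrArg List.length h
      simp only [List.length_drop, List.length_cons] at this
      omega
    rw [List.drop_eq_getElem_cons hj, List.cons_eq_cons] at h
    exact ⟨hj, h.1, h.2.symm⟩
  · rintro ⟨hj, rfl, rfl⟩
    exact List.drop_eq_getElem_cons hj

theorem List.getD_eq_iff_exists_drop_eq_cons {α : Type*} {l : List α} {a d : α} {j : ℕ}
    (ha : a ≠ d) : l.getD j d = a ↔ ∃ v, l.drop j = a :: v := by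
  simp only [List.drop_eq_cons_iff, exists_and_right]
  rcases lt_or_ge j l.length with hj | hj
  · simp [hj]
  · simp [Ne.symm ha, hj.not_gt]

section TableOrder

variable {ν : Type} {T T' T'' : Table ν}

theorem tableLE.eq_of_eq_some (h : tableLE T T') {i : ν} {j : ℕ} {r : Res}
    (hr : T i j = some r) : T' i j = some r := by
  rcases h i j with h | h <;> simp_all

theorem tableLE_of_forall (h : ∀ i j r, T i j = some r → T' i j = some r) :
    tableLE T T' := by
  intro i j
  cases hT : T i j with
  | none => exact Or.inl rfl
  | some r => exact Or.inr (h i j r hT).symm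

theorem tableLE.trans (h : tableLE T T') (h' : tableLE T' T'') : tableLE T T'' :=
  tableLE_of_forall fun _ _ _ hr => h'.eq_of_eq_some (h.eq_of_eq_some hr)

theorem botTable_tableLE : tableLE botTable T := fun _ _ => Or.inl rfl

variable {F : Table ν → Table ν}

theorem tableLE_iterate_succ (hF : ∀ T T', tableLE T T' → tableLE (F T) (F T')) (n : ℕ) :
    tableLE (F^[n] botTable) (F^[n + 1] botTable) := by
  induction n with
  | zero => exact botTable_tableLE
  | succ n ih =>
    rw [Function.iterate_succ_apply', Function.iterate_succ_apply' _ (n + 1)]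
    exact hF _ _ ih

theorem tableLE_iterate_of_le (hF : ∀ T T', tableLE T T' → tableLE (F T) (F T'))
    {n n' : ℕ} (h : n ≤ n') :
    tableLE (F^[n] botTable) (F^[n'] botTable) := by
  induction h with
  | refl => exact tableLE_of_forall fun _ _ _ => id
  | step _ ih => exact ih.trans (tableLE_iterate_succ hF _)

end TableOrder

def Res.toOutcome {σ : Type} (u : List σ) (j : ℕ) : Res → Option (List σ)
  | .ok m => some (u.drop (j + m))
  | .fail => none

def Res.FitsIn {σ : Type} (u : List σ) (j : ℕ) : Res → Prop
  | .ok m => j + m ≤ u.length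
  | .fail => True

section ParseTable

variable {σ ν : Type} [DecidableEq σ] {rule : ν → GExpr σ ν} {hash : σ} {u : List σ}

theorem step_mono {T T' : Table ν} (h : tableLE T T') :
    tableLE (step rule hash u T) (step rule hash u T') := by
  refine tableLE_of_forall fun i j r hr => ?_
  unfold step at hr ⊢
  split at hr
  all_goals try exact hr
  rename_i x y z _
  split at hr
  · rename_i m hx
    rw [h.eq_of_eq_some hx]
    split at hr
    · rename_i hy
      rw [h.eq_of_eq_some hy]
      exact hr
    · rename_i hy
      rw [h.eq_of_eq_some hy]
      exact hr
    · simp at hr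
  · rename_i hx
    rw [h.eq_of_eq_some hx]
    exact h.eq_of_eq_some hr
  · simp at hr

theorem matches_of_iterate_step_eq_some (hrule : ∀ i a, rule i = .sym a → a ≠ hash)
    (n : ℕ) {i : ν} {j : ℕ} {r : Res} (hj : j ≤ u.length)
    (h : (step rule hash u)^[n] botTable i j = some r) :
    r.FitsIn u j ∧ Matches rule i (u.drop j) (r.toOutcome u j) := by
  induction n generalizing i j r with
  | zero => simp [botTable] at h
  | succ n ih =>
    rw [Function.iterate_succ_apply'] at h
    unfold step at h
    split at h
    · rename_i hA
      cases h
      exact ⟨by simpa [Res.FitsIn] using hj, by simpa [Res.toOutcome] using Matches.eps hA⟩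
    · rename_i hA
      cases h
      exact ⟨trivial, Matches.fail hA⟩
    · rename_i a hA
      split at h
      · rename_i ha
        cases h
        obtain ⟨v, hv⟩ := (List.getD_eq_iff_exists_drop_eq_cons (hrule i a hA)).1 ha
        obtain ⟨hjlt, -, rfl⟩ := List.drop_eq_cons_iff.1 hv
        exact ⟨hjlt, hv ▸ Matches.symOk hA⟩
      · rename_i ha
        cases h
        exact ⟨trivial, Matches.symFail hA fun v hv =>
          ha ((List.getD_eq_iff_exists_drop_eq_cons (hrule i a hA)).2 ⟨v, hv⟩)⟩
    · rename_i x y z hA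
      split at h
      · rename_i m hx
        obtain ⟨hjm, hxm⟩ := ih hj hx
        split at h
        · rename_i m' hy
          cases h
          obtain ⟨hjmm, hym⟩ := ih hjm hy
          refine ⟨by simp only [Res.FitsIn] at hjmm ⊢; omega, ?_⟩
          simpa [Res.toOutcome, Nat.add_assoc] using Matches.ternSucc hA hxm hym
        · rename_i hy
          cases h
          exact ⟨trivial, Matches.ternSucc hA hxm (ih hjm hy).2⟩
        · simp at h
      · rename_i hx
        obtain ⟨hzr, hzm⟩ := ih hj h
        exact ⟨hzr, Matches.ternFail hA (ih hj hx).2 hzm⟩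
      · simp at h

theorem iterate_step_eq_some_of_le {n n' : ℕ} (hn : n ≤ n') {i : ν} {j : ℕ} {r : Res}
    (h : (step rule hash u)^[n] botTable i j = some r) :
    (step rule hash u)^[n'] botTable i j = some r :=
  (tableLE_iterate_of_le (fun _ _ => step_mono) hn).eq_of_eq_some h

theorem exists_iterate_step_eq_some_of_matches (hrule : ∀ i a, rule i = .sym a → a ≠ hash)
    {i : ν} {w : List σ} {o : Option (List σ)} (h : Matches rule i w o) {j : ℕ}
    (hj : j ≤ u.length) (hw : w = u.drop j) :
    ∃ r n, (step rule hash u)^[n] botTable i j = some r ∧ r.FitsIn u j ∧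
      o = r.toOutcome u j := by
  induction h generalizing j with
  | eps hA =>
    exact ⟨.ok 0, 1, by simp [step, hA], by simpa [Res.FitsIn] using hj,
      by simp [Res.toOutcome, hw]⟩
  | fail hA => exact ⟨.fail, 1, by simp [step, hA], trivial, rfl⟩
  | @symOk A a v hA =>
    obtain ⟨hjlt, -, rfl⟩ := List.drop_eq_cons_iff.1 hw.symm
    have ha : u.getD j hash = a :=
      (List.getD_eq_iff_exists_drop_eq_cons (hrule A a hA)).2 ⟨_, hw.symm⟩
    exact ⟨.ok 1, 1, by simp only [Function.iterate_one, step, hA, ha, ↓reduceIte], hjlt, rfl⟩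
  | @symFail A a v hA hne =>
    have ha : u.getD j hash ≠ a := fun ha => by
      obtain ⟨v', hv'⟩ := (List.getD_eq_iff_exists_drop_eq_cons (hrule A a hA)).1 ha
      exact hne v' (hw ▸ hv')
    exact ⟨.fail, 1, by simp only [Function.iterate_one, step, hA, ha, ↓reduceIte], trivial,
      rfl⟩
  | ternSucc hA _ _ ihx ihy =>
    obtain ⟨m | _, n₁, hx, hjm, hv⟩ := ihx hj hw
    · obtain ⟨r, n₂, hy, hr, rfl⟩ := ihy hjm (Option.some_injective _ hv)
      have hx' := iterate_step_eq_some_of_le (le_max_left n₁ n₂) hx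
      have hy' := iterate_step_eq_some_of_le (le_max_right n₁ n₂) hy
      cases r with
      | ok m' =>
        refine ⟨.ok (m + m'), max n₁ n₂ + 1, ?_, ?_, ?_⟩
        · simp [Function.iterate_succ_apply', step, hA, hx', hy']
        · simp only [Res.FitsIn] at hr ⊢
          omega
        · simp [Res.toOutcome, Nat.add_assoc]
      | fail =>
        exact ⟨.fail, max n₁ n₂ + 1,
          by simp [Function.iterate_succ_apply', step, hA, hx', hy'], trivial, rfl⟩
    · simp [Res.toOutcome] at hv
  | ternFail hA _ _ ihx ihz =>
    obtain ⟨_ | _, n₁, hx, -, hv⟩ := ihx hj hw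
    · simp [Res.toOutcome] at hv
    · obtain ⟨r, n₂, hz, hr, rfl⟩ := ihz hj hw
      have hx' := iterate_step_eq_some_of_le (le_max_left n₁ n₂) hx
      have hz' := iterate_step_eq_some_of_le (le_max_right n₁ n₂) hz
      exact ⟨r, max n₁ n₂ + 1, by simp [Function.iterate_succ_apply', step, hA, hx', hz'], hr,
        rfl⟩

theorem iterate_step_apply_of_length_le (n : ℕ) {i : ν} {j : ℕ} (hj : u.length ≤ j) :
    (step rule hash u)^[n] botTable i j = (step rule hash u)^[n] botTable i u.length := by
  induction n generalizing i j with
  | zero => rfl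
  | succ n ih =>
    simp only [Function.iterate_succ_apply', step]
    split
    · rfl
    · rfl
    · rw [List.getD_eq_default u hash hj, List.getD_eq_default u hash le_rfl]
    · rename_i x y z _
      rw [ih (i := x) hj]
      split
      · rw [ih (i := y) (by omega), ih (i := y) (j := u.length + _) (by omega)]
      · exact ih hj
      · rfl

theorem Res.toOutcome_injective_of_fitsIn {σ : Type} {u : List σ} {j : ℕ} {r r' : Res}
    (hr : r.FitsIn u j) (hr' : r'.FitsIn u j) (h : r.toOutcome u j = r'.toOutcome u j) :
    r = r' := by
  cases r <;> cases r' <;> simp only [Res.FitsIn, Res.toOutcome, Option.some.injEq,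
    Res.ok.injEq, reduceCtorEq] at hr hr' h ⊢
  have := congrArg List.length h
  simp only [List.length_drop] at this
  omega

variable {T : Table ν}

theorem IsLfp.apply_of_length_lt (hT : IsLfp (step rule hash u) T) {i : ν} {j : ℕ}
    (hj : u.length < j) : T i j = T i u.length :=
  Option.ext fun r => by
    rw [hT i j r, hT i u.length r]
    simp only [iterate_step_apply_of_length_le _ hj.le]

theorem IsLfp.apply_eq_some_iff (hT : IsLfp (step rule hash u) T)
    (hrule : ∀ i a, rule i = .sym a → a ≠ hash) {i : ν} {j : ℕ} {r : Res}
    (hj : j ≤ u.length) :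
    T i j = some r ↔ r.FitsIn u j ∧ Matches rule i (u.drop j) (r.toOutcome u j) := by
  refine ⟨fun h => ?_, fun ⟨hr, hm⟩ => ?_⟩
  · obtain ⟨n, hn⟩ := (hT i j r).1 h
    exact matches_of_iterate_step_eq_some hrule n hj hn
  · obtain ⟨r', n, hn, hr', ho⟩ := exists_iterate_step_eq_some_of_matches hrule hm hj rfl
    rw [Res.toOutcome_injective_of_fitsIn hr hr' ho]
    exact (hT i j r').2 ⟨n, hn⟩

theorem IsLfp.apply_eq_none_iff (hT : IsLfp (step rule hash u) T)
    (hrule : ∀ i a, rule i = .sym a → a ≠ hash) {i : ν} {j : ℕ} (hj : j ≤ u.length) :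
    T i j = none ↔ ∀ o, ¬ Matches rule i (u.drop j) o := by
  refine ⟨fun h o hm => ?_, fun h => ?_⟩
  · obtain ⟨r, n, hn, -⟩ := exists_iterate_step_eq_some_of_matches hrule hm hj rfl
    simp [(hT i j r).2 ⟨n, hn⟩] at h
  · cases hTij : T i j with
    | none => rfl
    | some r => exact absurd ((hT.apply_eq_some_iff hrule hj).1 hTij).2 (h _)

theorem IsLfp.fundamentalProps (hT : IsLfp (step rule hash u) T)
    (hrule : ∀ i a, rule i = .sym a → a ≠ hash) : FundamentalProps rule u T :=
  ⟨fun _ _ hj =>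
    ⟨by simpa [Res.FitsIn, Res.toOutcome] using hT.apply_eq_some_iff hrule hj (r := .fail),
      fun _ => hT.apply_eq_some_iff hrule hj, hT.apply_eq_none_iff hrule hj⟩,
    fun _ _ hj => hT.apply_of_length_lt hj⟩

end ParseTable

theorem FundamentalProps.eq {σ ν : Type} {rule : ν → GExpr σ ν} {u : List σ}
    {T T' : Table ν} (h : FundamentalProps rule u T) (h' : FundamentalProps rule u T') :
    T = T' := by
  have low : ∀ i j, j ≤ u.length → T i j = T' i j := fun i j hj => Option.ext fun
    | .ok m => ((h.1 i j hj).2.1 m).trans ((h'.1 i j hj).2.1 m).symm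
    | .fail => (h.1 i j hj).1.trans (h'.1 i j hj).1.symm
  funext i j
  rcases le_or_gt j u.length with hj | hj
  · exact low i j hj
  · rw [h.2 i j hj, h'.2 i j hj, low i u.length le_rfl]

theorem fundamental_theorem_general {σ ν : Type} [DecidableEq σ]
    (rule : ν → GExpr σ ν) (hash : σ)
    (hrule : ∀ i a, rule i = .sym a → a ≠ hash)
    (u : List σ)
    (T : Table ν) (hT : IsLfp (step rule hash u) T) :
    FundamentalProps rule u T ∧
      ∀ T' : Table ν, FundamentalProps rule u T' → T' = T :=
  ⟨hT.fundamentalProps hrule, fun _ h' => h'.eq (hT.fundamentalProps hrule)⟩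

/-- The fundamental theorem of parse tables: the parse table
`T(u) = lfp F^u` tabulates the operational semantics of the program on all
suffixes of `u`, is constant beyond column `|u|`, and is the unique table with
these properties. -/
theorem fundamental_theorem {σ ν : Type} [DecidableEq σ]
    (rule : ν → GExpr σ ν) (hash : σ)
    (hrule : ∀ i a, rule i = .sym a → a ≠ hash)
    (u : List σ) (hu : hash ∉ u)
    (T : Table ν) (hT : IsLfp (step rule hash u) T) :
    FundamentalProps rule u T ∧
      ∀ T' : Table ν, FundamentalProps rule u T' → T' = T :=
  fundamental_theorem_general rule hash hrule u T hT
end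

section
/- The prefix table is a sound approximation of all future parse tables: for all u ∈ Σ*, T^<(u) ⊑ T^⊓(u), where T^⊓(u) = ⨅_{v ∈ Σ*} T(uv). In particular, if T^<(u)_{ij} = m (or f), then for every extension v, T(uv)_{ij} = m (respectively f). -/
variable {σ ν : Type}

theorem tableLE_iff {T T' : Table ν} :
    tableLE T T' ↔ ∀ i j r, T i j = some r → T' i j = some r := by
  refine ⟨fun h i j r hr => ?_, fun h i j => ?_⟩
  · rcases h i j with h | h <;> simp_all
  · cases hT : T i j with
    | none => exact Or.inl rfl
    | some r => exact Or.inr (h i j r hT).symm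

theorem tableLE.some_eq {T T' : Table ν} (h : tableLE T T') {i : ν} {j : ℕ} {r : Res}
    (hr : T i j = some r) : T' i j = some r :=
  tableLE_iff.mp h i j r hr

theorem tableLE_refl (T : Table ν) : tableLE T T :=
  fun _ _ => Or.inr rfl

theorem tableLE_trans {T₁ T₂ T₃ : Table ν} (h₁₂ : tableLE T₁ T₂) (h₂₃ : tableLE T₂ T₃) :
    tableLE T₁ T₃ :=
  tableLE_iff.mpr fun _ _ _ hr => h₂₃.some_eq (h₁₂.some_eq hr)

theorem botTable_le (T : Table ν) : tableLE botTable T :=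
  fun _ _ => Or.inl rfl

def TableMonotone (F : Table ν → Table ν) : Prop :=
  ∀ ⦃T T' : Table ν⦄, tableLE T T' → tableLE (F T) (F T')

namespace TableMonotone

variable {F : Table ν → Table ν}

theorem iterate_botTable_le_succ (hF : TableMonotone F) (n : ℕ) :
    tableLE (F^[n] botTable) (F^[n + 1] botTable) := by
  induction n with
  | zero => exact botTable_le _
  | succ n ih =>
    rw [Function.iterate_succ_apply', Function.iterate_succ_apply' F (n + 1)]
    exact hF ih

theorem iterate_botTable_mono (hF : TableMonotone F) {n m : ℕ} (hnm : n ≤ m) :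
    tableLE (F^[n] botTable) (F^[m] botTable) := by
  induction hnm with
  | refl => exact tableLE_refl _
  | step _ ih => exact tableLE_trans ih (hF.iterate_botTable_le_succ _)

end TableMonotone

namespace IsLfp

variable {F : Table ν → Table ν} {T : Table ν}

theorem le_of_map_le (hF : TableMonotone F) (hT : IsLfp F T) {S : Table ν}
    (hS : tableLE (F S) S) : tableLE T S := by
  have hiter : ∀ n, tableLE (F^[n] botTable) S := by
    intro n
    induction n with
    | zero => exact botTable_le S
    | succ n ih =>
      rw [Function.iterate_succ_apply']
      exact tableLE_trans (hF ih) hS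
  refine tableLE_iff.mpr fun i j r hr => ?_
  obtain ⟨n, hn⟩ := (hT i j r).mp hr
  exact (hiter n).some_eq hn

theorem exists_iterate_eq_some₂ (hF : TableMonotone F) (hT : IsLfp F T)
    {i₁ i₂ : ν} {j₁ j₂ : ℕ} {r₁ r₂ : Res} (h₁ : T i₁ j₁ = some r₁) (h₂ : T i₂ j₂ = some r₂) :
    ∃ n, F^[n] botTable i₁ j₁ = some r₁ ∧ F^[n] botTable i₂ j₂ = some r₂ := by
  obtain ⟨n₁, hn₁⟩ := (hT _ _ _).mp h₁
  obtain ⟨n₂, hn₂⟩ := (hT _ _ _).mp h₂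
  exact ⟨max n₁ n₂, (hF.iterate_botTable_mono (le_max_left _ _)).some_eq hn₁,
    (hF.iterate_botTable_mono (le_max_right _ _)).some_eq hn₂⟩

end IsLfp

section step

variable [DecidableEq σ] (rule : ν → GExpr σ ν) (hash : σ)

theorem step_mono_s8 (w : List σ) : TableMonotone (step rule hash w) := by
  intro T T' h
  refine tableLE_iff.mpr fun i j r hr => ?_
  simp only [step] at hr ⊢
  cases hrule : rule i with
  | eps | fail | sym a => simpa only [hrule] using hr
  | tern x y z =>
    simp only [hrule] at hr ⊢
    cases hx : T x j with
    | none => simp [hx] at hr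
    | some rx =>
      simp only [hx, h.some_eq hx] at hr ⊢
      cases rx with
      | ok m =>
        cases hy : T y (j + m) with
        | none => simp [hy] at hr
        | some ry => simpa only [hy, h.some_eq hy] using hr
      | fail => exact h.some_eq hr

theorem stepPrefix_mono (u : List σ) : TableMonotone (stepPrefix rule hash u) := by
  intro T T' h
  refine tableLE_iff.mpr fun i j r hr => ?_
  simp only [stepPrefix] at hr ⊢
  split_ifs at hr ⊢
  · exact (step_mono_s8 rule hash u h).some_eq hr
  · exact h.some_eq hr

/-- The least fixed point of `F^w` is a pre-fixed point: each entry of `F^w T` reads at most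
two entries of `T`, and these are resolved at a common finite stage. -/
theorem IsLfp.step_le_self {w : List σ} {T : Table ν} (hT : IsLfp (step rule hash w) T) :
    tableLE (step rule hash w T) T := by
  refine tableLE_iff.mpr fun i j r hr => (hT i j r).mpr ?_
  simp only [step] at hr
  cases hrule : rule i with
  | eps | fail | sym a => exact ⟨1, by simpa only [Function.iterate_one, step, hrule] using hr⟩
  | tern x y z =>
    simp only [hrule] at hr
    cases hx : T x j with
    | none => simp [hx] at hr
    | some rx =>
      simp only [hx] at hr
      cases rx with
      | ok m =>
        cases hy : T y (j + m) with
        | none => simp [hy] at hr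
        | some ry =>
          obtain ⟨n, hnx, hny⟩ := hT.exists_iterate_eq_some₂ (step_mono_s8 rule hash w) hx hy
          refine ⟨n + 1, ?_⟩
          simpa only [Function.iterate_succ_apply', step, hrule, hnx, hny, hy] using hr
      | fail =>
        obtain ⟨n, hnx, hnz⟩ := hT.exists_iterate_eq_some₂ (step_mono_s8 rule hash w) hx hr
        refine ⟨n + 1, ?_⟩
        simpa only [Function.iterate_succ_apply', step, hrule, hnx] using hnz

theorem step_append_of_lt (u v : List σ) (T : Table ν) (i : ν) {j : ℕ} (hj : j < u.length) :
    step rule hash (u ++ v) T i j = step rule hash u T i j := by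
  simp only [step]
  cases rule i with
  | sym a => rw [List.getD_append _ _ _ _ hj]
  | _ => rfl

theorem stepPrefix_le_of_step_append_le (u v : List σ) {T : Table ν}
    (hT : tableLE (step rule hash (u ++ v) T) T) : tableLE (stepPrefix rule hash u T) T := by
  intro i j
  simp only [stepPrefix]
  split_ifs with hj
  · rw [← step_append_of_lt rule hash u v T i hj]
    exact hT i j
  · exact Or.inr rfl

end step

theorem prefixTable_approximates_general {σ ν : Type} [DecidableEq σ]
    (rule : ν → GExpr σ ν) (hash : σ)
    (u : List σ)
    (Tp : Table ν) (hTp : IsLfp (stepPrefix rule hash u) Tp) :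
    ∀ v : List σ, hash ∉ v →
      ∀ Tuv : Table ν, IsLfp (step rule hash (u ++ v)) Tuv →
        tableLE Tp Tuv := by
  intro v _ Tuv hTuv
  exact hTp.le_of_map_le (stepPrefix_mono rule hash u)
    (stepPrefix_le_of_step_append_le rule hash u v (hTuv.step_le_self rule hash))

/-- Approximation: the prefix table `T^<(u) = lfp F^{(u)}` is a sound
approximation of all future parse tables, i.e. `T^<(u) ⊑ T^⊓(u) = ⨅_v T(uv)`:
`T^<(u)` is below the parse table `T(uv)` of every extension `uv` of `u`.
In particular, if `T^<(u)_{ij} = m` (or `f`), then `T(uv)_{ij} = m`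
(respectively `f`) for every extension `v`. -/
theorem prefixTable_approximates {σ ν : Type} [DecidableEq σ]
    (rule : ν → GExpr σ ν) (hash : σ)
    (hrule : ∀ i a, rule i = .sym a → a ≠ hash)
    (u : List σ) (hu : hash ∉ u)
    (Tp : Table ν) (hTp : IsLfp (stepPrefix rule hash u) Tp) :
    ∀ v : List σ, hash ∉ v →
      ∀ Tuv : Table ν, IsLfp (step rule hash (u ++ v)) Tuv →
        tableLE Tp Tuv :=
  prefixTable_approximates_general rule hash u Tp hTp
end

section
/- Prefix tables are monotone in the input prefix: for all strings u, v ∈ Σ*, T^<(u) ⊑ T^<(uv) in the pointwise table order. -/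
lemma iter_none_of_ge {σ ν : Type} [DecidableEq σ]
    (rule : ν → GExpr σ ν) (hash : σ) (u : List σ) :
    ∀ n i j, u.length ≤ j → (stepPrefix rule hash u)^[n] botTable i j = none := by
  intro n
  induction n with
  | zero => intro i j _; rfl
  | succ n ih =>
    intro i j hj
    rw [Function.iterate_succ_apply']
    simp only [stepPrefix, if_neg (Nat.not_lt.mpr hj)]
    exact ih i j hj

lemma iter_mono {σ ν : Type} [DecidableEq σ]
    (rule : ν → GExpr σ ν) (hash : σ) (u v : List σ) :
    ∀ n i j r, (stepPrefix rule hash u)^[n] botTable i j = some r →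
      (stepPrefix rule hash (u ++ v))^[n] botTable i j = some r := by
  intro n
  induction n with
  | zero => intro i j r h; exact h
  | succ n ih =>
    intro i j r h
    rw [Function.iterate_succ_apply'] at h ⊢
    by_cases hj : j < u.length
    · have hj' : j < (u ++ v).length := by
        simp [List.length_append]; omega
      simp only [stepPrefix, if_pos hj] at h
      simp only [stepPrefix, if_pos hj']
      have hget : (u ++ v).getD j hash = u.getD j hash := by
        rw [List.getD_eq_getElem _ _ hj, List.getD_eq_getElem _ _ hj',
          List.getElem_append_left hj]
      cases hri : rule i with
      | eps => simpa [step, hri] using h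
      | fail => simpa [step, hri] using h
      | sym a =>
        simp only [step, hri, hget] at h ⊢
        exact h
      | tern x y z =>
        simp only [step, hri] at h ⊢
        cases hx : (stepPrefix rule hash u)^[n] botTable x j with
        | none => rw [hx] at h; exact absurd h (by simp)
        | some rx =>
          rw [hx] at h
          rw [ih x j rx hx]
          cases rx with
          | fail => exact ih z j r h
          | ok m =>
            dsimp only at h ⊢
            cases hy : (stepPrefix rule hash u)^[n] botTable y (j + m) with
            | none => rw [hy] at h; exact absurd h (by simp)
            | some ry =>
              rw [hy] at h
              rw [ih y (j + m) ry hy]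
              exact h
    · rw [show (stepPrefix rule hash u) ((stepPrefix rule hash u)^[n] botTable) i j
          = (stepPrefix rule hash u)^[n] botTable i j from by
            simp [stepPrefix, if_neg hj]] at h
      rw [iter_none_of_ge rule hash u n i j (Nat.not_lt.mp hj)] at h
      exact absurd h (by simp)

/-- Prefix monotonicity: prefix tables are monotone in the input prefix.
For all `u, v ∈ Σ*`, `T^<(u) ⊑ T^<(uv)` in the pointwise table order, where
`T^<(w) = lfp F^{(w)}`. -/
theorem prefixTable_monotone {σ ν : Type} [DecidableEq σ]
    (rule : ν → GExpr σ ν) (hash : σ)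
    (hrule : ∀ i a, rule i = .sym a → a ≠ hash)
    (u v : List σ) (hu : hash ∉ u) (hv : hash ∉ v)
    (T T' : Table ν)
    (hT : IsLfp (stepPrefix rule hash u) T)
    (hT' : IsLfp (stepPrefix rule hash (u ++ v)) T') :
    tableLE T T' := by
  intro i j
  cases h : T i j with
  | none => exact Or.inl rfl
  | some r =>
    right
    obtain ⟨n, hn⟩ := (hT i j r).mp h
    exact ((hT' i j r).mpr ⟨n, iter_mono rule hash u v n i j r hn⟩).symm
end

section
/- Appending an end-of-input marker makes the prefix table total on the input range: for all u ∈ Σ* and all indices (i,j) with j ≤ |u|, T^<(u#)_{ij} = T(u)_{ij}, where # ∉ Σ is a fresh end marker. -/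
section Aux

variable {σ ν : Type} [DecidableEq σ]

lemma getD_app_hash (u : List σ) (hash : σ) (j : ℕ) :
    (u ++ [hash]).getD j hash = u.getD j hash := by
  rcases lt_or_ge j u.length with h | h
  · rw [List.getD_append _ _ _ _ h]
  · rw [List.getD_append_right _ _ _ _ h, List.getD_eq_default _ _ h]
    rcases Nat.eq_or_lt_of_le h with h' | h'
    · simp [← h']
    · rw [List.getD_eq_default]
      simp only [List.length_singleton]
      omega

lemma step_app (rule : ν → GExpr σ ν) (hash : σ) (u : List σ) :
    step rule hash (u ++ [hash]) = step rule hash u := by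
  funext T i j
  simp only [step, getD_app_hash]

lemma iter_bound (rule : ν → GExpr σ ν) (hash : σ)
    (hrule : ∀ i a, rule i = .sym a → a ≠ hash) (u : List σ) :
    ∀ n i j m, (step rule hash u)^[n] botTable i j = some (.ok m) →
      j + m ≤ max j u.length := by
  intro n
  induction n with
  | zero => intro i j m h; simp [botTable] at h
  | succ n ih =>
    intro i j m h
    rw [Function.iterate_succ_apply'] at h
    rcases hr : rule i with _ | _ | a | ⟨x, y, z⟩
    · simp only [step, hr] at h
      cases h
      simp
    · simp only [step, hr] at h
      simp at h
    · simp only [step, hr] at h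
      split_ifs at h with hg
      · cases h
        have hj : j < u.length := by
          by_contra hj
          push_neg at hj
          rw [List.getD_eq_default _ _ hj] at hg
          exact hrule i a hr hg.symm
        omega
      · simp at h
    · simp only [step, hr] at h
      rcases hx : (step rule hash u)^[n] botTable x j with _ | (m₁ | _)
      · simp only [hx] at h
        simp at h
      · simp only [hx] at h
        rcases hy : (step rule hash u)^[n] botTable y (j + m₁) with _ | (m₂ | _)
        · simp only [hy] at h
          simp at h
        · simp only [hy] at h
          cases h
          have h1 := ih x j m₁ hx
          have h2 := ih y (j + m₁) m₂ hy
          omega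
        · simp only [hy] at h
          simp at h
      · simp only [hx] at h
        have := ih z j m h
        omega

lemma iter_eq (rule : ν → GExpr σ ν) (hash : σ)
    (hrule : ∀ i a, rule i = .sym a → a ≠ hash) (u : List σ) :
    ∀ n i j, j ≤ u.length →
      (stepPrefix rule hash (u ++ [hash]))^[n] botTable i j =
      (step rule hash u)^[n] botTable i j := by
  intro n
  induction n with
  | zero => intro i j _; rfl
  | succ n ih =>
    intro i j hj
    rw [Function.iterate_succ_apply', Function.iterate_succ_apply']
    have hlen : j < (u ++ [hash]).length := by simp; omega
    rw [stepPrefix, if_pos hlen, step_app]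
    rcases hr : rule i with _ | _ | a | ⟨x, y, z⟩
    · simp only [step, hr]
    · simp only [step, hr]
    · simp only [step, hr]
    · simp only [step, hr]
      rw [ih x j hj]
      rcases hx : (step rule hash u)^[n] botTable x j with _ | (m₁ | _)
      · rfl
      · have hb := iter_bound rule hash hrule u n x j m₁ hx
        have hle : j + m₁ ≤ u.length := by
          rcases le_total j u.length with h' | h' <;> simp [max_eq_right, max_eq_left, h'] at hb <;> omega
        simp only [ih y (j + m₁) hle]
      · exact ih z j hj

end Aux

/-- End marker: appending a fresh end-of-input marker `# ∉ Σ` makes the prefix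
table total on the input range: for all `u ∈ Σ*` and all indices `(i,j)` with
`j ≤ |u|`, `T^<(u#)_{ij} = T(u)_{ij}`, where `T^<(u#) = lfp F^{(u#)}` is the
prefix table of the string `u#` of length `|u|+1` and `T(u) = lfp F^u`. -/
theorem prefixTable_endMarker {σ ν : Type} [DecidableEq σ]
    (rule : ν → GExpr σ ν) (hash : σ)
    (hrule : ∀ i a, rule i = .sym a → a ≠ hash)
    (u : List σ) (hu : hash ∉ u)
    (T Tp : Table ν)
    (hT : IsLfp (step rule hash u) T)
    (hTp : IsLfp (stepPrefix rule hash (u ++ [hash])) Tp) :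
    ∀ i j, j ≤ u.length → Tp i j = T i j := by
  intro i j hj
  have key : ∀ r, Tp i j = some r ↔ T i j = some r := by
    intro r
    rw [hTp, hT]
    constructor <;> rintro ⟨n, hn⟩ <;> exact ⟨n, by
      rw [iter_eq rule hash hrule u n i j hj] at * <;> exact hn⟩
  rcases hp : Tp i j with _ | r
  · rcases ht : T i j with _ | r
    · rfl
    · exact absurd (hp ▸ (key r).mpr ht) (by simp)
  · exact ((key r).mp hp).symm
end

section
/- Work set characterization: for any table T and input u, the work set Δ_u(T) = {(i,j) : T_{ij} ⊏ F^{(u)}(T)_{ij}} equals the set of indices (i,j) ∈ J_u such that T_{ij} = ⊥ and, whenever the rule expression g_i is complex (of the form A_x[A_y,A_z]), the dynamic dependency D^T_{ij} is defined and the entry of T at D^T_{ij} is not ⊥. -/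
/-- Work set characterization: for any table `T` and input `u`, the work set
`Δ_u(T) = {(i,j) : T_{ij} ⊏ F^{(u)}(T)_{ij}}` equals the set of indices
`(i,j) ∈ J_u = {(i,j) : j < |u|}` such that `T_{ij} = ⊥` and, whenever the rule
expression `g_i` is complex (of the form `A_x[A_y,A_z]`), the dynamic dependency
`D^T_{ij}` is defined and the entry of `T` at `D^T_{ij}` is not `⊥`. -/
theorem workSet_characterization {σ ν : Type} [DecidableEq σ]
    (rule : ν → GExpr σ ν) (hash : σ)
    (hrule : ∀ i a, rule i = .sym a → a ≠ hash)
    (u : List σ) (T : Table ν) :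
    ∀ i j,
      (T i j = none ∧ stepPrefix rule hash u T i j ≠ none) ↔
      (j < u.length ∧ T i j = none ∧
        ((∃ x y z, rule i = GExpr.tern x y z) →
          ∃ k l, dynDep rule T i j = some (k, l) ∧ T k l ≠ none)) := by
  intro i j
  by_cases hj : j < u.length
  · simp only [stepPrefix, if_pos hj, hj, true_and]
    constructor
    · rintro ⟨hT, hs⟩
      refine ⟨hT, fun ⟨x, y, z, hr⟩ => ?_⟩
      simp only [step, dynDep, hr] at hs ⊢
      match hx : T x j with
      | some (.ok m) =>
        simp only [hx] at hs ⊢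
        match hy : T y (j + m) with
        | some r' => exact ⟨y, j + m, rfl, by simp [hy]⟩
        | none => simp [hy] at hs
      | some .fail =>
        simp only [hx] at hs ⊢
        exact ⟨z, j, rfl, hs⟩
      | none => simp [hx] at hs
    · rintro ⟨hT, hd⟩
      refine ⟨hT, ?_⟩
      cases hr : rule i with
      | eps => simp [step, hr]
      | fail => simp [step, hr]
      | sym a =>
        by_cases h : u[j]?.getD hash = a <;> simp [step, hr, List.getD, h]
      | tern x y z =>
        obtain ⟨k, l, hkl, hne⟩ := hd ⟨x, y, z, hr⟩
        simp only [dynDep, hr] at hkl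
        simp only [step, hr]
        match hx : T x j with
        | some (.ok m) =>
          simp only [hx, Option.some.injEq, Prod.mk.injEq] at hkl
          obtain ⟨rfl, rfl⟩ := hkl
          match hy : T y (j + m) with
          | some (.ok m') => simp [hy]
          | some .fail => simp [hy]
          | none => exact absurd hy hne
        | some .fail =>
          simp only [hx, Option.some.injEq, Prod.mk.injEq] at hkl
          obtain ⟨rfl, rfl⟩ := hkl
          simp only [hx]; exact hne
        | none => simp [hx] at hkl
  · simp only [stepPrefix, if_neg hj, hj, false_and, iff_false]
    rintro ⟨hT, hs⟩
    exact hs hT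
end

section
/- Dependency difference: let S be a table with S ⊑ T^<(u), let (p,q) ∈ Δ_u(S), and let T = F^{(u)}_{pq}(S) be the table obtained by updating only entry (p,q). Then the set of indices whose dynamic dependency becomes newly defined, {(i,j) : D^S_{ij} = ⊥ and D^T_{ij} ≠ ⊥}, equals C⁻¹_p × {q}, where C⁻¹_p = {i : A_i ← A_p[A_y,A_z] for some y, z}. -/
/-- The single-entry update `F^{(u)}_{pq}`-style operation: update entry `(p,q)`
of `T` to the value `v`, leaving all other entries unchanged. -/
def updateEntry {ν : Type} [DecidableEq ν] (T : Table ν) (p : ν) (q : ℕ)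
    (v : Option Res) : Table ν :=
  fun i j => if i = p ∧ j = q then v else T i j

/-- Dependency difference: let `S ⊑ T^<(u)`, let `(p,q) ∈ Δ_u(S)` (i.e.
`S_{pq} = ⊥` and `F^{(u)}(S)_{pq} ≠ ⊥`), and let `T = F^{(u)}_{pq}(S)` be
obtained by updating only entry `(p,q)`.  Then the set of indices whose dynamic
dependency becomes newly defined, `{(i,j) : D^S_{ij} = ⊥ ∧ D^T_{ij} ≠ ⊥}`,
equals `C⁻¹_p × {q}`, where `C⁻¹_p = {i : A_i ← A_p[A_y,A_z] for some y, z}`. -/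
theorem dependency_difference {σ ν : Type} [DecidableEq σ] [DecidableEq ν]
    (rule : ν → GExpr σ ν) (hash : σ)
    (hrule : ∀ i a, rule i = .sym a → a ≠ hash)
    (u : List σ)
    (S Tp : Table ν)
    (hTp : IsLfp (stepPrefix rule hash u) Tp)
    (hS : tableLE S Tp)
    (p : ν) (q : ℕ)
    (hwork : S p q = none ∧ stepPrefix rule hash u S p q ≠ none) :
    ∀ i j,
      (dynDep rule S i j = none ∧
        dynDep rule (updateEntry S p q (stepPrefix rule hash u S p q)) i j ≠ none)
      ↔ ((∃ y z, rule i = GExpr.tern p y z) ∧ j = q) := by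
  intro i j
  constructor
  · rintro ⟨h1, h2⟩
    cases hr : rule i with
    | tern x y z =>
      unfold dynDep at h1 h2
      rw [hr] at h1 h2
      by_cases hxj : x = p ∧ j = q
      · obtain ⟨rfl, rfl⟩ := hxj
        exact ⟨⟨y, z, rfl⟩, rfl⟩
      · exfalso
        simp only [updateEntry, hxj, if_false] at h2
        exact h2 h1
    | eps => exfalso; unfold dynDep at h2; rw [hr] at h2; exact h2 rfl
    | fail => exfalso; unfold dynDep at h2; rw [hr] at h2; exact h2 rfl
    | sym a => exfalso; unfold dynDep at h2; rw [hr] at h2; exact h2 rfl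
  · rintro ⟨⟨y, z, hr⟩, rfl⟩
    unfold dynDep
    rw [hr]
    refine ⟨by simp [hwork.1], ?_⟩
    simp only [updateEntry, and_self, if_true]
    cases hv : stepPrefix rule hash u S p j with
    | none => exact absurd hv hwork.2
    | some r => cases r <;> simp
end

section
/- Dependency strictness: let T be a table with T ⊑ T^<(u), let (i,j) be an index whose rule expression g_i is complex, and suppose the dynamic dependency D^T_{ij} = ⊥. Then F^{(u)}(T)_{ij} = ⊥; i.e., an entry for a complex expression cannot be resolved by one application of the prefix operator while its dynamic dependency is undetermined. -/
/-- Dependency strictness: let `T ⊑ T^<(u)`, let `(i,j)` be an index whose rule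
expression `g_i` is complex, and suppose the dynamic dependency `D^T_{ij} = ⊥`.
Then `F^{(u)}(T)_{ij} = ⊥`: an entry for a complex expression cannot be resolved
by one application of the prefix operator while its dynamic dependency is
undetermined. -/
theorem dependency_strictness {σ ν : Type} [DecidableEq σ]
    (rule : ν → GExpr σ ν) (hash : σ)
    (hrule : ∀ i a, rule i = .sym a → a ≠ hash)
    (u : List σ)
    (T Tp : Table ν)
    (hTp : IsLfp (stepPrefix rule hash u) Tp)
    (hT : tableLE T Tp)
    (i : ν) (j : ℕ)
    (hcomplex : ∃ x y z, rule i = GExpr.tern x y z)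
    (hdep : dynDep rule T i j = none) :
    stepPrefix rule hash u T i j = none := by
  obtain ⟨x, y, z, hx⟩ := hcomplex
  have hxj : T x j = none := by
    simp only [dynDep, hx] at hdep
    rcases h : T x j with _ | ⟨m⟩ | _
    · rfl
    · simp [h] at hdep
    · simp [h] at hdep
  by_cases hj : j < u.length
  · simp [stepPrefix, hj, step, hx, hxj]
  · have hfix : ∀ S : Table ν, stepPrefix rule hash u S i j = S i j := by
      intro S; simp [stepPrefix, hj]
    rw [hfix]
    -- entries outside columns < |u| stay ⊥ in the lfp
    have hiter : ∀ n, (stepPrefix rule hash u)^[n] botTable i j = none := by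
      intro n
      induction n with
      | zero => rfl
      | succ n ih => rw [Function.iterate_succ_apply', hfix, ih]
    have hTpij : Tp i j = none := by
      rcases h : Tp i j with _ | r
      · rfl
      · obtain ⟨n, hn⟩ := (hTp i j r).mp h
        rw [hiter n] at hn; exact absurd hn (by simp)
    rcases hT i j with h | h
    · exact h
    · rw [h, hTpij]
end
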